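/- Let (F, G) be a Frobenius pair between abelian categories with enough projectives, and assume F is a separable functor. If the class of Gorenstein projective objects is precovering in D, then the class of Gorenstein projective objects is precovering in C. -/

import Mathlib

/-!
Each of `F`, `G` has both adjoints, so it is exact and preserves projectives, and the
`Hom(-, Q)`-acyclicity of a complete resolution transfers along the adjunction; hence `F` and `G`
preserve Gorenstein projectives. For a Gorenstein projective precover `φ : Y ⟶ F M`, the composite
`G Y ⟶ G F M ⟶ M` with the retraction `ψ` of the unit is again one: `f : X ⟶ M` lifts through the
unit `X ⟶ G F X` followed by `G` of a lift of `F f` through `φ`.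
-/

open CategoryTheory Limits

/-- An object `M` of an abelian category is *Gorenstein projective* if it is a syzygy
(the kernel `ker(P⁰ → P¹)`) of an acyclic complex `P` of projective objects such that
`Hom(P, Q)` is acyclic for every projective `Q`. -/
def IsGorensteinProjective {A : Type*} [Category A] [Abelian A] (M : A) : Prop :=
  ∃ P : CochainComplex A ℤ,
    (∀ n : ℤ, Projective (P.X n)) ∧
    (∀ n : ℤ, P.ExactAt n) ∧
    Nonempty (M ≅ P.cycles 0) ∧
    ∀ (Q : A), Projective Q → ∀ (n : ℤ) (f : P.X n ⟶ Q), P.d (n - 1) n ≫ f = 0 →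
      ∃ g : P.X (n + 1) ⟶ Q, P.d n (n + 1) ≫ g = f

/-- `φ : X ⟶ M` is an `𝒳`-precover of `M` if `X ∈ 𝒳` and every morphism from an object
of `𝒳` to `M` factors through `φ`. -/
def IsPrecover {A : Type*} [Category A] (𝒳 : A → Prop) {X M : A} (φ : X ⟶ M) : Prop :=
  𝒳 X ∧ ∀ (X' : A), 𝒳 X' → ∀ f : X' ⟶ M, ∃ g : X' ⟶ X, g ≫ φ = f

section

variable {C D : Type*} [Category C] [Category D]

lemma CategoryTheory.Adjunction.exists_map_comp_eq [HasZeroMorphisms C] [HasZeroMorphisms D]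
    {F : C ⥤ D} {G : D ⥤ C} (adj : F ⊣ G) {X Y Z : C} {a : X ⟶ Y} {b : Y ⟶ Z} {Q : D}
    (h : ∀ f : Y ⟶ G.obj Q, a ≫ f = 0 → ∃ g : Z ⟶ G.obj Q, b ≫ g = f)
    (f : F.obj Y ⟶ Q) (hf : F.map a ≫ f = 0) : ∃ g : F.obj Z ⟶ Q, F.map b ≫ g = f := by
  have := adj.isRightAdjoint
  obtain ⟨g, hg⟩ := h (adj.homEquiv _ _ f) (by
    rw [← adj.homEquiv_naturality_left, hf, adj.homEquiv_unit, G.map_zero, comp_zero])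
  exact ⟨(adj.homEquiv _ _).symm g,
    by rw [← adj.homEquiv_naturality_left_symm, hg, Equiv.symm_apply_apply]⟩

lemma HomologicalComplex.ExactAt.map [Abelian C] [Abelian D] {ι : Type*} {c : ComplexShape ι}
    {K : HomologicalComplex C c} {i : ι} (h : K.ExactAt i) (F : C ⥤ D)
    [F.PreservesZeroMorphisms] [F.PreservesHomology] :
    ((F.mapHomologicalComplex c).obj K).ExactAt i :=
  ((exactAt_iff _ _).mp h).map F

lemma IsGorensteinProjective.map [Abelian C] [Abelian D] {F : C ⥤ D} {G : D ⥤ C}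
    (adj₁ : F ⊣ G) (adj₂ : G ⊣ F) {M : C} (hM : IsGorensteinProjective M) :
    IsGorensteinProjective (F.obj M) := by
  obtain ⟨P, hproj, hexact, ⟨e⟩, hlift⟩ := hM
  have := adj₁.isLeftAdjoint
  have := adj₂.isRightAdjoint
  have := adj₂.isLeftAdjoint
  refine ⟨(F.mapHomologicalComplex _).obj P, fun n => adj₁.map_projective _ (hproj n),
    fun n => (hexact n).map F, ⟨F.mapIso e ≪≫ ((P.sc 0).mapCyclesIso F).symm⟩,
    fun Q hQ n => adj₁.exists_map_comp_eq (hlift _ (adj₂.map_projective _ hQ) n)⟩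

lemma IsPrecover.of_unit_retraction {F : C ⥤ D} {G : D ⥤ C} (adj : F ⊣ G)
    {ψ : F ⋙ G ⟶ 𝟭 C} (hψ : adj.unit ≫ ψ = 𝟙 (𝟭 C))
    {𝒳 : C → Prop} {𝒴 : D → Prop} (hF : ∀ X, 𝒳 X → 𝒴 (F.obj X)) (hG : ∀ Y, 𝒴 Y → 𝒳 (G.obj Y))
    {M : C} {Y : D} {φ : Y ⟶ F.obj M} (hφ : IsPrecover 𝒴 φ) :
    IsPrecover 𝒳 (G.map φ ≫ ψ.app M) := by
  refine ⟨hG Y hφ.1, fun X hX (f : X ⟶ M) => ?_⟩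
  obtain ⟨g, hg⟩ := hφ.2 (F.obj X) (hF X hX) (F.map f)
  refine ⟨adj.unit.app X ≫ G.map g, ?_⟩
  have hψM : adj.unit.app M ≫ ψ.app M = 𝟙 M := congr_app hψ M
  calc (adj.unit.app X ≫ G.map g) ≫ G.map φ ≫ ψ.app M
      = adj.unit.app X ≫ G.map (F.map f) ≫ ψ.app M := by simp [← hg]
    _ = f ≫ adj.unit.app M ≫ ψ.app M := adj.unit_naturality_assoc f (ψ.app M)
    _ = f := by rw [hψM, Category.comp_id]

end

theorem gp_precovering_of_separable_left_general {C D : Type*} [Category C] [Category D]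
    [Abelian C] [Abelian D]
    (F : C ⥤ D) (G : D ⥤ C)
    (adj₁ : F ⊣ G) (adj₂ : G ⊣ F)
    (hsep : ∃ ψ : F ⋙ G ⟶ 𝟭 C, adj₁.unit ≫ ψ = 𝟙 (𝟭 C))
    (hD : ∀ N : D, ∃ (Y : D) (φ : Y ⟶ N), IsPrecover (IsGorensteinProjective (A := D)) φ) :
    ∀ M : C, ∃ (X : C) (φ : X ⟶ M), IsPrecover (IsGorensteinProjective (A := C)) φ := by
  obtain ⟨ψ, hψ⟩ := hsep
  intro M
  obtain ⟨Y, φ, hφ⟩ := hD (F.obj M)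
  exact ⟨G.obj Y, G.map φ ≫ ψ.app M, hφ.of_unit_retraction adj₁ hψ
    (fun _ hX => hX.map adj₁ adj₂) (fun _ hY => hY.map adj₂ adj₁)⟩

/-- If `(F, G)` is a Frobenius pair between abelian categories with enough projectives,
`F` is separable (the unit of `F ⊣ G` has a natural retraction), and the Gorenstein
projective objects are precovering in `D`, then they are precovering in `C`. -/
theorem gp_precovering_of_separable_left {C D : Type*} [Category C] [Category D]
    [Abelian C] [Abelian D] [EnoughProjectives C] [EnoughProjectives D]
    (F : C ⥤ D) (G : D ⥤ C) [F.Additive] [G.Additive]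
    (adj₁ : F ⊣ G) (adj₂ : G ⊣ F)
    (hsep : ∃ ψ : F ⋙ G ⟶ 𝟭 C, adj₁.unit ≫ ψ = 𝟙 (𝟭 C))
    (hD : ∀ N : D, ∃ (Y : D) (φ : Y ⟶ N), IsPrecover (IsGorensteinProjective (A := D)) φ) :
    ∀ M : C, ∃ (X : C) (φ : X ⟶ M), IsPrecover (IsGorensteinProjective (A := C)) φ :=
  gp_precovering_of_separable_left_general F G adj₁ adj₂ hsep hD
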